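/- arXiv:2602.10783 — 11 statements merged into one kernel-verified Lean document; each statement's English description precedes it below -/
import Mathlib

section
/- Define d(a, r) = Σ_{i=1}^n r_i (a_i + a_{i−1} − r_{i−1} − r_i) for vectors a = (a_0, ..., a_n) and r = (r_1, ..., r_n) of nonnegative integers, with r_0 = r_{n+1} = 0. Suppose r and the vector r' obtained from r by increasing the i-th entry by 1 both satisfy the feasibility constraints r_j + r_{j+1} ≤ a_j for all j = 0, ..., n. Then d(a, r') ≥ d(a, r) + 1, i.e., d is strictly increasing in each rank coordinate within the feasible region. -/
/-!
Raising `r i` by one changes only the summands `k = i` and `k = i + 1` of `d(a, r)`: the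
first grows by `a i + a (i - 1) - r (i - 1) - 2 r i - 1`, the second (present only when
`i < n`) drops by `r (i + 1)`. Feasibility of the raised vector at `j = i - 1` and `j = i`
bounds `a (i - 1) + a i` from below by exactly enough to make the net change at least `1`.
-/

open Finset

def chainDimTerm (a r : ℕ → ℕ) (k : ℕ) : ℤ :=
  (r k : ℤ) * ((a k : ℤ) + a (k - 1) - r (k - 1) - r k)

def chainDim (a r : ℕ → ℕ) (n : ℕ) : ℤ :=
  ∑ k ∈ Icc 1 n, chainDimTerm a r k

theorem chainDimTerm_update_sub (a r : ℕ → ℕ) {i : ℕ} (hi : 1 ≤ i) (k : ℕ) :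
    chainDimTerm a (Function.update r i (r i + 1)) k - chainDimTerm a r k =
      (if k = i then (a i : ℤ) + a (i - 1) - r (i - 1) - 2 * r i - 1 else 0) -
        if k = i + 1 then (r (i + 1) : ℤ) else 0 := by
  unfold chainDimTerm
  by_cases hki : k = i
  · subst hki
    simp only [Function.update_self, Function.update_of_ne (show k - 1 ≠ k by omega),
      Nat.cast_add, Nat.cast_one, if_pos, if_neg (show k ≠ k + 1 by omega), sub_zero]
    ring
  by_cases hki1 : k = i + 1
  · subst hki1
    simp only [add_tsub_cancel_right, Function.update_self,
      Function.update_of_ne (show i + 1 ≠ i by omega), Nat.cast_add, Nat.cast_one, if_pos,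
      if_neg (show i + 1 ≠ i by omega), zero_sub]
    ring
  simp [Function.update_of_ne (show k - 1 ≠ i by omega), hki, hki1]

theorem chainDim_update_sub (a r : ℕ → ℕ) {n i : ℕ} (hi : 1 ≤ i) (hin : i ≤ n) :
    chainDim a (Function.update r i (r i + 1)) n - chainDim a r n =
      ((a i : ℤ) + a (i - 1) - r (i - 1) - 2 * r i - 1) -
        if i + 1 ≤ n then (r (i + 1) : ℤ) else 0 := by
  unfold chainDim
  rw [← sum_sub_distrib]
  simp only [chainDimTerm_update_sub a r hi, sum_sub_distrib, sum_ite_eq', mem_Icc]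
  simp [hi, hin]

theorem stmt3_general (n : ℕ) (a r : ℕ → ℕ) (i : ℕ) (hi1 : 1 ≤ i) (hin : i ≤ n)
    (r' : ℕ → ℕ) (hr' : r' = Function.update r i (r i + 1))
    (hfeas' : ∀ j ≤ n, r' j + r' (j + 1) ≤ a j) :
    (∑ k ∈ Icc 1 n, (r k : ℤ) * ((a k : ℤ) + a (k - 1) - r (k - 1) - r k)) + 1 ≤
      ∑ k ∈ Icc 1 n, (r' k : ℤ) * ((a k : ℤ) + a (k - 1) - r' (k - 1) - r' k) := by
  subst hr'
  change chainDim a r n + 1 ≤ chainDim a _ n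
  have hleft := hfeas' (i - 1) (by omega)
  have hright := hfeas' i hin
  rw [Nat.sub_add_cancel hi1, Function.update_self,
    Function.update_of_ne (show i - 1 ≠ i by omega)] at hleft
  rw [Function.update_self, Function.update_of_ne (show i + 1 ≠ i by omega)] at hright
  have hdrop : (if i + 1 ≤ n then (r (i + 1) : ℤ) else 0) ≤ r (i + 1) := by
    split_ifs <;> simp
  have hchange := chainDim_update_sub a r hi1 hin
  omega

/-- Monotonicity Lemma: the dimension
`d(a, r) = ∑_{i=1}^n r i * (a i + a (i-1) - r (i-1) - r i)` (conventions
`r 0 = r (n+1) = 0`) strictly increases (by at least 1) when a single rank `r i`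
(`1 ≤ i ≤ n`) is increased by 1, provided both rank vectors satisfy the
feasibility constraints `r j + r (j+1) ≤ a j` for all `j ≤ n`. -/
theorem stmt3 (n : ℕ) (a r : ℕ → ℕ) (i : ℕ) (hi1 : 1 ≤ i) (hin : i ≤ n)
    (hr0 : r 0 = 0) (hrn : r (n + 1) = 0)
    (r' : ℕ → ℕ) (hr' : r' = Function.update r i (r i + 1))
    (hfeas : ∀ j ≤ n, r j + r (j + 1) ≤ a j)
    (hfeas' : ∀ j ≤ n, r' j + r' (j + 1) ≤ a j) :
    (∑ k ∈ Icc 1 n, (r k : ℤ) * ((a k : ℤ) + a (k - 1) - r (k - 1) - r k)) + 1 ≤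
      ∑ k ∈ Icc 1 n, (r' k : ℤ) * ((a k : ℤ) + a (k - 1) - r' (k - 1) - r' k) :=
  stmt3_general n a r i hi1 hin r' hr' hfeas'
end

section
/- Let a_0, a_1, a_2 be nonnegative integers with a_1 ≥ a_0 + a_2, and define d(r_1, r_2) = r_1(a_0 + a_1) + r_2(a_1 + a_2) − r_1² − r_2² − r_1 r_2. Then the unique maximizer of d over the feasible region {(r_1, r_2) ∈ ℤ_{≥0}² : r_1 ≤ a_0, r_2 ≤ a_2, r_1 + r_2 ≤ a_1} is (r_1, r_2) = (a_0, a_2), which yields Betti numbers (β_0, β_1, β_2) = (0, a_1 − a_0 − a_2, 0). -/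
/-- The dimension of the variety of length-2 chain complexes with ranks `(r₁, r₂)`. -/
def d2 (a₀ a₁ a₂ : ℕ) (r : ℤ × ℤ) : ℤ :=
  r.1 * (a₀ + a₁) + r.2 * (a₁ + a₂) - r.1 ^ 2 - r.2 ^ 2 - r.1 * r.2

/-- Feasibility of the rank vector `(r₁, r₂)`. -/
def feas2 (a₀ a₁ a₂ : ℕ) (r : ℤ × ℤ) : Prop :=
  0 ≤ r.1 ∧ 0 ≤ r.2 ∧ r.1 ≤ a₀ ∧ r.2 ≤ a₂ ∧ r.1 + r.2 ≤ a₁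

/-!
Writing a rank vector as `(a₀ - x, a₂ - y)`, the loss `d2 (a₀, a₂) - d2 (a₀ - x, a₂ - y)` equals
`(x + y) (a₁ - a₀ - a₂) + (x² + x y + y²)`: both partial derivatives of `d2` at `(a₀, a₂)` equal
`a₁ - a₀ - a₂ ≥ 0`, and the quadratic part is positive definite. On the feasible region
`x, y ≥ 0`, hence the loss is at least `x² + x y + y²`, which vanishes only at `x = y = 0`.
-/

theorem d2_sub_d2_sub (a₀ a₁ a₂ : ℕ) (x y : ℤ) :
    d2 a₀ a₁ a₂ (a₀, a₂) - d2 a₀ a₁ a₂ (a₀ - x, a₂ - y) =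
      (x + y) * (a₁ - a₀ - a₂) + (x ^ 2 + x * y + y ^ 2) := by
  simp only [d2]
  ring

theorem sq_add_mul_add_sq_le_d2_sub {a₀ a₁ a₂ : ℕ} (h : a₀ + a₂ ≤ a₁) {r : ℤ × ℤ}
    (h₁ : r.1 ≤ a₀) (h₂ : r.2 ≤ a₂) :
    (a₀ - r.1) ^ 2 + (a₀ - r.1) * (a₂ - r.2) + (a₂ - r.2) ^ 2 ≤
      d2 a₀ a₁ a₂ (a₀, a₂) - d2 a₀ a₁ a₂ r := by
  have hslack : (0 : ℤ) ≤ a₁ - a₀ - a₂ := by omega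
  have hr : r = (a₀ - (a₀ - r.1), a₂ - (a₂ - r.2)) := by simp
  rw [hr, d2_sub_d2_sub]
  simp only [sub_sub_cancel]
  nlinarith [mul_nonneg (add_nonneg (sub_nonneg.2 h₁) (sub_nonneg.2 h₂)) hslack]

theorem eq_zero_of_sq_add_mul_add_sq_nonpos {x y : ℤ} (hx : 0 ≤ x) (hy : 0 ≤ y)
    (h : x ^ 2 + x * y + y ^ 2 ≤ 0) : x = 0 ∧ y = 0 := by
  constructor <;> nlinarith [mul_nonneg hx hy]

theorem feas2_apex {a₀ a₁ a₂ : ℕ} (h : a₀ + a₂ ≤ a₁) :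
    feas2 a₀ a₁ a₂ ((a₀ : ℤ), (a₂ : ℤ)) :=
  ⟨by positivity, by positivity, le_rfl, le_rfl, by simp only; exact_mod_cast h⟩

/-- If `a₁ ≥ a₀ + a₂`, the unique maximizer of `d2` over the feasible region is
`(a₀, a₂)`, yielding Betti numbers `(0, a₁ - a₀ - a₂, 0)`. -/
theorem stmt4 (a₀ a₁ a₂ : ℕ) (h : a₀ + a₂ ≤ a₁) :
    feas2 a₀ a₁ a₂ ((a₀ : ℤ), (a₂ : ℤ)) ∧
    (∀ r : ℤ × ℤ, feas2 a₀ a₁ a₂ r →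
      d2 a₀ a₁ a₂ r ≤ d2 a₀ a₁ a₂ ((a₀ : ℤ), (a₂ : ℤ))) ∧
    (∀ r : ℤ × ℤ, feas2 a₀ a₁ a₂ r →
      d2 a₀ a₁ a₂ r = d2 a₀ a₁ a₂ ((a₀ : ℤ), (a₂ : ℤ)) → r = ((a₀ : ℤ), (a₂ : ℤ))) ∧
    (((a₀ : ℤ) - a₀, (a₁ : ℤ) - a₀ - a₂, (a₂ : ℤ) - a₂) =
      ((0 : ℤ), (a₁ : ℤ) - a₀ - a₂, (0 : ℤ))) := by
  refine ⟨feas2_apex h, ?_, ?_, by simp⟩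
  · rintro r ⟨-, -, h₁, h₂, -⟩
    nlinarith [sq_add_mul_add_sq_le_d2_sub h h₁ h₂, mul_nonneg (sub_nonneg.2 h₁) (sub_nonneg.2 h₂)]
  · rintro r ⟨-, -, h₁, h₂, -⟩ heq
    obtain ⟨hx, hy⟩ := eq_zero_of_sq_add_mul_add_sq_nonpos (sub_nonneg.2 h₁) (sub_nonneg.2 h₂)
      (by linarith [sq_add_mul_add_sq_le_d2_sub h h₁ h₂])
    exact Prod.ext (by linarith) (by linarith)
end

section
/- Let a_0, a_1, a_2 be nonnegative integers with a_1 < a_0 + a_2, and define d(r_1, r_2) = r_1(a_0 + a_1) + r_2(a_1 + a_2) − r_1² − r_2² − r_1 r_2. Then every maximizer (r_1, r_2) of d over the feasible region {(r_1, r_2) ∈ ℤ_{≥0}² : r_1 ≤ a_0, r_2 ≤ a_2, r_1 + r_2 ≤ a_1} satisfies r_1 + r_2 = a_1. -/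
/-- If `a₁ < a₀ + a₂`, every maximizer of `d2` over the feasible region satisfies
`r₁ + r₂ = a₁`. -/
theorem stmt5 (a₀ a₁ a₂ : ℕ) (h : a₁ < a₀ + a₂) :
    ∀ r : ℤ × ℤ, feas2 a₀ a₁ a₂ r →
      (∀ s : ℤ × ℤ, feas2 a₀ a₁ a₂ s → d2 a₀ a₁ a₂ s ≤ d2 a₀ a₁ a₂ r) →
      r.1 + r.2 = a₁ := by
  intro r hr hmax
  obtain ⟨h1, h2, h3, h4, h5⟩ := hr
  by_contra hne
  have hlt : r.1 + r.2 < a₁ := lt_of_le_of_ne h5 hne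
  have hZ : (a₁ : ℤ) < a₀ + a₂ := by exact_mod_cast h
  -- not both r.1 = a₀ and r.2 = a₂
  have hcase : r.1 < a₀ ∨ r.2 < a₂ := by
    by_contra hc
    push_neg at hc
    obtain ⟨c1, c2⟩ := hc
    omega
  rcases hcase with hc | hc
  · have := hmax (r.1 + 1, r.2) ⟨by omega, h2, by omega, h4, by omega⟩
    simp only [d2] at this
    nlinarith [this]
  · have := hmax (r.1, r.2 + 1) ⟨h1, by omega, h3, by omega, by omega⟩
    simp only [d2] at this
    nlinarith [this]
end

section
/- Let a_0, a_1, a_2 be nonnegative integers and let (r_1, r_2) maximize d(r_1, r_2) = r_1(a_0 + a_1) + r_2(a_1 + a_2) − r_1² − r_2² − r_1 r_2 over the feasible region {(r_1, r_2) ∈ ℤ_{≥0}² : r_1 ≤ a_0, r_2 ≤ a_2, r_1 + r_2 ≤ a_1}. Then the Betti numbers β_0 = a_0 − r_1, β_1 = a_1 − r_1 − r_2, β_2 = a_2 − r_2 satisfy β_0 + β_1 + β_2 = |a_0 − a_1 + a_2|. -/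
lemma d2_fst_add_one (a₀ a₁ a₂ : ℕ) (r : ℤ × ℤ) :
    d2 a₀ a₁ a₂ (r.1 + 1, r.2) = d2 a₀ a₁ a₂ r + (a₀ + a₁ - 2 * r.1 - r.2 - 1) := by
  simp only [d2]
  ring

lemma d2_swap (a₀ a₁ a₂ : ℕ) (r : ℤ × ℤ) : d2 a₂ a₁ a₀ r.swap = d2 a₀ a₁ a₂ r := by
  simp only [d2, Prod.fst_swap, Prod.snd_swap]
  ring

lemma feas2_swap (a₀ a₁ a₂ : ℕ) (r : ℤ × ℤ) : feas2 a₂ a₁ a₀ r.swap ↔ feas2 a₀ a₁ a₂ r := by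
  simp only [feas2, Prod.fst_swap, Prod.snd_swap]
  omega

lemma fst_eq_or_add_eq_of_isMax (a₀ a₁ a₂ : ℕ) (r : ℤ × ℤ) (hr : feas2 a₀ a₁ a₂ r)
    (hmax : ∀ s : ℤ × ℤ, feas2 a₀ a₁ a₂ s → d2 a₀ a₁ a₂ s ≤ d2 a₀ a₁ a₂ r) :
    r.1 = a₀ ∨ r.1 + r.2 = a₁ := by
  obtain ⟨hr₁, hr₂, hr₁_le, hr₂_le, hsum_le⟩ := hr
  by_contra! hslack
  have hstep := hmax (r.1 + 1, r.2) ⟨by omega, hr₂, by omega, hr₂_le, by omega⟩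
  rw [d2_fst_add_one] at hstep
  omega

lemma snd_eq_or_add_eq_of_isMax (a₀ a₁ a₂ : ℕ) (r : ℤ × ℤ) (hr : feas2 a₀ a₁ a₂ r)
    (hmax : ∀ s : ℤ × ℤ, feas2 a₀ a₁ a₂ s → d2 a₀ a₁ a₂ s ≤ d2 a₀ a₁ a₂ r) :
    r.2 = a₂ ∨ r.1 + r.2 = a₁ := by
  have hmax_swap (s : ℤ × ℤ) (hs : feas2 a₂ a₁ a₀ s) : d2 a₂ a₁ a₀ s ≤ d2 a₂ a₁ a₀ r.swap := by
    have := hmax s.swap (by rwa [← feas2_swap, Prod.swap_swap])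
    rwa [← d2_swap a₀ a₁ a₂ s.swap, Prod.swap_swap, ← d2_swap a₀ a₁ a₂ r] at this
  have := fst_eq_or_add_eq_of_isMax a₂ a₁ a₀ r.swap ((feas2_swap a₀ a₁ a₂ r).2 hr) hmax_swap
  simpa only [Prod.fst_swap, Prod.snd_swap, add_comm r.2] using this

/-- For any maximizer `(r₁, r₂)` of `d2` over the feasible region, the Betti numbers
`β₀ = a₀ - r₁`, `β₁ = a₁ - r₁ - r₂`, `β₂ = a₂ - r₂` satisfy
`β₀ + β₁ + β₂ = |a₀ - a₁ + a₂|`. -/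
theorem stmt6 (a₀ a₁ a₂ : ℕ) :
    ∀ r : ℤ × ℤ, feas2 a₀ a₁ a₂ r →
      (∀ s : ℤ × ℤ, feas2 a₀ a₁ a₂ s → d2 a₀ a₁ a₂ s ≤ d2 a₀ a₁ a₂ r) →
      ((a₀ : ℤ) - r.1) + ((a₁ : ℤ) - r.1 - r.2) + ((a₂ : ℤ) - r.2) =
        |(a₀ : ℤ) - a₁ + a₂| := by
  intro r hr hmax
  have hfst := fst_eq_or_add_eq_of_isMax a₀ a₁ a₂ r hr hmax
  have hsnd := snd_eq_or_add_eq_of_isMax a₀ a₁ a₂ r hr hmax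
  obtain ⟨-, -, hr₁_le, hr₂_le, hsum_le⟩ := hr
  rcases eq_or_ne (r.1 + r.2) (a₁ : ℤ) with hsum | hsum
  · rw [abs_of_nonneg (by omega)]
    omega
  · rw [abs_of_nonpos (by omega)]
    omega
end

section
/- Let a_0, a_1, a_2 be nonnegative integers with a_2 − a_1 ≤ a_0 ≤ a_1 + a_2, a_1 ≤ a_0 + a_2, and a_0 − a_1 + a_2 even. Then the unique maximizer of d(r_1, r_2) = r_1(a_0 + a_1) + r_2(a_1 + a_2) − r_1² − r_2² − r_1 r_2 over {(r_1, r_2) ∈ ℤ_{≥0}² : r_1 ≤ a_0, r_2 ≤ a_2, r_1 + r_2 ≤ a_1} is (r_1, r_2) = ((a_0 + a_1 − a_2)/2, (−a_0 + a_1 + a_2)/2), giving Betti numbers (χ/2, 0, χ/2) where χ = a_0 − a_1 + a_2. -/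
/-! Write `χ = 2k`, `p = a₀ - k`, `q = a₂ - k`, so that `p + q = a₁`. Both partial derivatives
of `d2` at `(p, q)` equal `k ≥ 0`, so expanding around `(p, q)` gives
`d2 r = d2 (p, q) + k (r₁ + r₂ - a₁) - (x² + x y + y²)` with `(x, y) = r - (p, q)`.
On the feasible region `r₁ + r₂ ≤ a₁`, so the middle term is `≤ 0`, while the form
`x² + x y + y²` is positive definite; hence `(p, q)` is the unique maximizer, with Betti numbers
`(k, 0, k)`. -/

section QuadraticForm

variable {R : Type*} [CommRing R] [LinearOrder R] [IsStrictOrderedRing R]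

-- `4 (x² + x y + y²) = (2x + y)² + 3 y²`
theorem sq_add_mul_add_sq_nonneg (x y : R) : 0 ≤ x ^ 2 + x * y + y ^ 2 := by
  nlinarith [sq_nonneg (2 * x + y), sq_nonneg y]

theorem sq_add_mul_add_sq_eq_zero_iff {x y : R} :
    x ^ 2 + x * y + y ^ 2 = 0 ↔ x = 0 ∧ y = 0 := by
  refine ⟨fun h => ?_, fun ⟨hx, hy⟩ => by simp [hx, hy]⟩
  have hy : y = 0 := by nlinarith [sq_nonneg (2 * x + y), sq_nonneg y]
  subst hy
  simpa using h

end QuadraticForm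

theorem d2_eq_of_center (a₀ a₁ a₂ : ℕ) {p q k : ℤ} (hp : (a₀ : ℤ) = p + k)
    (hpq : (a₁ : ℤ) = p + q) (hq : (a₂ : ℤ) = q + k) (r : ℤ × ℤ) :
    d2 a₀ a₁ a₂ r = d2 a₀ a₁ a₂ (p, q) + k * (r.1 + r.2 - a₁)
      - ((r.1 - p) ^ 2 + (r.1 - p) * (r.2 - q) + (r.2 - q) ^ 2) := by
  simp only [d2, hp, hpq, hq]
  ring

section Center

variable {a₀ a₁ a₂ : ℕ} {p q k : ℤ} (hp : (a₀ : ℤ) = p + k) (hpq : (a₁ : ℤ) = p + q)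
  (hq : (a₂ : ℤ) = q + k) (hk : 0 ≤ k)
include hp hpq hq hk

theorem d2_add_form_le_d2_center {r : ℤ × ℤ} (hr : feas2 a₀ a₁ a₂ r) :
    d2 a₀ a₁ a₂ r + ((r.1 - p) ^ 2 + (r.1 - p) * (r.2 - q) + (r.2 - q) ^ 2)
      ≤ d2 a₀ a₁ a₂ (p, q) := by
  have hslack : k * (r.1 + r.2 - a₁) ≤ 0 :=
    mul_nonpos_of_nonneg_of_nonpos hk (by linarith [hr.2.2.2.2])
  linarith [d2_eq_of_center a₀ a₁ a₂ hp hpq hq r]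

theorem d2_le_d2_center {r : ℤ × ℤ} (hr : feas2 a₀ a₁ a₂ r) :
    d2 a₀ a₁ a₂ r ≤ d2 a₀ a₁ a₂ (p, q) := by
  linarith [d2_add_form_le_d2_center hp hpq hq hk hr, sq_add_mul_add_sq_nonneg (r.1 - p) (r.2 - q)]

theorem eq_center_of_d2_center_le {r : ℤ × ℤ} (hr : feas2 a₀ a₁ a₂ r)
    (hle : d2 a₀ a₁ a₂ (p, q) ≤ d2 a₀ a₁ a₂ r) : r = (p, q) := by
  have hform : (r.1 - p) ^ 2 + (r.1 - p) * (r.2 - q) + (r.2 - q) ^ 2 = 0 :=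
    le_antisymm (by linarith [d2_add_form_le_d2_center hp hpq hq hk hr])
      (sq_add_mul_add_sq_nonneg _ _)
  obtain ⟨hx, hy⟩ := sq_add_mul_add_sq_eq_zero_iff.mp hform
  exact Prod.ext (sub_eq_zero.mp hx) (sub_eq_zero.mp hy)

end Center

/-- If `a₂ - a₁ ≤ a₀ ≤ a₁ + a₂`, `a₁ ≤ a₀ + a₂` and `χ = a₀ - a₁ + a₂` is even, then
the unique maximizer of `d2` over the feasible region is
`((a₀ + a₁ - a₂)/2, (-a₀ + a₁ + a₂)/2)`, giving Betti numbers `(χ/2, 0, χ/2)`. -/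
theorem stmt7 (a₀ a₁ a₂ : ℕ) (h₁ : (a₂ : ℤ) - a₁ ≤ a₀) (h₂ : a₀ ≤ a₁ + a₂)
    (h₃ : a₁ ≤ a₀ + a₂) (h₄ : Even ((a₀ : ℤ) - a₁ + a₂)) :
    feas2 a₀ a₁ a₂ (((a₀ : ℤ) + a₁ - a₂) / 2, ((a₁ : ℤ) + a₂ - a₀) / 2) ∧
    (∀ r : ℤ × ℤ, feas2 a₀ a₁ a₂ r →
      d2 a₀ a₁ a₂ r ≤ d2 a₀ a₁ a₂ (((a₀ : ℤ) + a₁ - a₂) / 2, ((a₁ : ℤ) + a₂ - a₀) / 2)) ∧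
    (∀ r : ℤ × ℤ, feas2 a₀ a₁ a₂ r →
      (∀ s : ℤ × ℤ, feas2 a₀ a₁ a₂ s → d2 a₀ a₁ a₂ s ≤ d2 a₀ a₁ a₂ r) →
      r = (((a₀ : ℤ) + a₁ - a₂) / 2, ((a₁ : ℤ) + a₂ - a₀) / 2)) ∧
    ((a₀ : ℤ) - ((a₀ : ℤ) + a₁ - a₂) / 2 = ((a₀ : ℤ) - a₁ + a₂) / 2 ∧
     (a₁ : ℤ) - ((a₀ : ℤ) + a₁ - a₂) / 2 - ((a₁ : ℤ) + a₂ - a₀) / 2 = 0 ∧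
     (a₂ : ℤ) - ((a₁ : ℤ) + a₂ - a₀) / 2 = ((a₀ : ℤ) - a₁ + a₂) / 2) := by
  obtain ⟨k, hk⟩ := h₄
  have hp : ((a₀ : ℤ) + a₁ - a₂) / 2 = a₀ - k := by omega
  have hq : ((a₁ : ℤ) + a₂ - a₀) / 2 = a₂ - k := by omega
  have hχ : ((a₀ : ℤ) - a₁ + a₂) / 2 = k := by omega
  rw [hp, hq, hχ]
  have hcenter₀ : (a₀ : ℤ) = (a₀ - k) + k := by ring
  have hcenter₁ : (a₁ : ℤ) = (a₀ - k) + (a₂ - k) := by omega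
  have hcenter₂ : (a₂ : ℤ) = (a₂ - k) + k := by ring
  have hk₀ : 0 ≤ k := by omega
  have hfeas : feas2 a₀ a₁ a₂ (a₀ - k, a₂ - k) := by
    refine ⟨?_, ?_, ?_, ?_, ?_⟩ <;> dsimp only <;> omega
  refine ⟨hfeas, fun r hr => d2_le_d2_center hcenter₀ hcenter₁ hcenter₂ hk₀ hr,
    fun r hr hmax => eq_center_of_d2_center_le hcenter₀ hcenter₁ hcenter₂ hk₀ hr (hmax _ hfeas),
    by ring, by omega, by ring⟩
end

section
/- Let a_0, a_1, a_2 be nonnegative integers with a_2 − a_1 ≤ a_0 ≤ a_1 + a_2, a_1 ≤ a_0 + a_2, and a_0 − a_1 + a_2 odd. Then the set of maximizers of d(r_1, r_2) = r_1(a_0 + a_1) + r_2(a_1 + a_2) − r_1² − r_2² − r_1 r_2 over {(r_1, r_2) ∈ ℤ_{≥0}² : r_1 ≤ a_0, r_2 ≤ a_2, r_1 + r_2 ≤ a_1} is exactly {((a_0 + a_1 − a_2 − 1)/2, (−a_0 + a_1 + a_2 + 1)/2), ((a_0 + a_1 − a_2 + 1)/2, (−a_0 + a_1 + a_2 − 1)/2)},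 and both maximizers give the same value of d. -/
/-!
Write `a₀ + a₁ - a₂ = 2k + 1`. For every `(x, y)`, with `t = a₁ - x - y` the slack of the
constraint `r₁ + r₂ ≤ a₁`,
`d(k, a₁ - k) - d(x, y) = (x - k)(x - k - 1) + t (a₂ - y)`,
and symmetrically (exchanging the roles of `(a₀, r₁)` and `(a₂, r₂)`)
`d(k + 1, a₁ - k - 1) - d(x, y) = (y - a₁ + k + 1)(y - a₁ + k) + t (a₀ - x)`.
On the feasible region all terms are nonnegative, the first factor being a product of consecutive
integers. So both points are maximizers with the same value, and a maximizer has `x ∈ {k, k + 1}`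
unless `t > 0`; but then it also has `y = a₂` and `x = a₀`, so that `t = a₁ - a₀ - a₂ ≤ 0`.
-/

theorem setOf_maximizers_eq_pair {α β : Type*} [LE β] {P : α → Prop} {f : α → β}
    {p q : α} (hp : P p) (hq : P q) (hpq : f p = f q) (hle : ∀ s, P s → f s ≤ f p)
    (heq : ∀ s, P s → f p ≤ f s → s = p ∨ s = q) :
    {r | P r ∧ ∀ s, P s → f s ≤ f r} = {p, q} := by
  ext r
  constructor
  · rintro ⟨hr, hmax⟩
    exact heq r hr (hmax p hp)
  · rintro (rfl | rfl)
    · exact ⟨hp, hle⟩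
    · exact ⟨hq, fun s hs => hpq ▸ hle s hs⟩

theorem Int.mul_sub_one_nonneg (n : ℤ) : 0 ≤ n * (n - 1) := by
  rcases le_or_gt n 0 with h | h
  · exact mul_nonneg_of_nonpos_of_nonpos h (by omega)
  · exact mul_nonneg h.le (by omega)

section

variable {a₀ a₁ a₂ : ℕ} {k : ℤ}

theorem d2_sub_eq (hk : (a₀ : ℤ) + a₁ - a₂ = 2 * k + 1) (x y : ℤ) :
    d2 a₀ a₁ a₂ (k, a₁ - k) - d2 a₀ a₁ a₂ (x, y) =
      (x - k) * (x - k - 1) + (a₁ - x - y) * (a₂ - y) := by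
  have ha₀ : (a₀ : ℤ) = 2 * k + 1 - a₁ + a₂ := by omega
  simp only [d2, ha₀]
  ring

theorem d2_sub_eq' (hk : (a₀ : ℤ) + a₁ - a₂ = 2 * k + 1) (x y : ℤ) :
    d2 a₀ a₁ a₂ (k + 1, a₁ - k - 1) - d2 a₀ a₁ a₂ (x, y) =
      (y - (a₁ - k - 1)) * (y - (a₁ - k - 1) - 1) + (a₁ - x - y) * (a₀ - x) := by
  have ha₂ : (a₂ : ℤ) = a₀ + a₁ - 2 * k - 1 := by omega
  simp only [d2, ha₂]
  ring

theorem d2_eq_d2 (hk : (a₀ : ℤ) + a₁ - a₂ = 2 * k + 1) :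
    d2 a₀ a₁ a₂ (k, a₁ - k) = d2 a₀ a₁ a₂ (k + 1, a₁ - k - 1) :=
  sub_eq_zero.mp ((d2_sub_eq hk _ _).trans (by ring))

theorem d2_le_of_feas2 (hk : (a₀ : ℤ) + a₁ - a₂ = 2 * k + 1) {r : ℤ × ℤ}
    (hr : feas2 a₀ a₁ a₂ r) : d2 a₀ a₁ a₂ r ≤ d2 a₀ a₁ a₂ (k, a₁ - k) := by
  obtain ⟨-, -, -, hy, hxy⟩ := hr
  have hgap := d2_sub_eq hk r.1 r.2
  have hslack : 0 ≤ (a₁ - r.1 - r.2) * (a₂ - r.2) := mul_nonneg (by omega) (by omega)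
  linarith [Int.mul_sub_one_nonneg (r.1 - k)]

theorem eq_or_eq_of_feas2_of_d2_le (hk : (a₀ : ℤ) + a₁ - a₂ = 2 * k + 1)
    (h₃ : a₁ ≤ a₀ + a₂) {r : ℤ × ℤ} (hr : feas2 a₀ a₁ a₂ r)
    (hmax : d2 a₀ a₁ a₂ (k, a₁ - k) ≤ d2 a₀ a₁ a₂ r) :
    r = (k, a₁ - k) ∨ r = (k + 1, a₁ - k - 1) := by
  obtain ⟨x, y⟩ := r
  obtain ⟨-, -, hx, hy, hxy⟩ := hr
  have hgap := d2_sub_eq hk x y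
  have hgap' := d2_sub_eq' hk x y
  rw [← d2_eq_d2 hk] at hgap'
  have hcons := Int.mul_sub_one_nonneg (x - k)
  have hcons' := Int.mul_sub_one_nonneg (y - (a₁ - k - 1))
  have hslack : 0 ≤ (a₁ - x - y) * (a₂ - y) := mul_nonneg (by omega) (by omega)
  have hslack' : 0 ≤ (a₁ - x - y) * (a₀ - x) := mul_nonneg (by omega) (by omega)
  have hx_eq : (x - k) * (x - k - 1) = 0 := by linarith
  have ht₂ : (a₁ - x - y) * (a₂ - y) = 0 := by linarith
  have ht₀ : (a₁ - x - y) * ((a₀ : ℤ) - x) = 0 := by linarith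
  have ht : (a₁ : ℤ) - x - y = 0 := by
    rcases mul_eq_zero.mp ht₂ with h | h
    · exact h
    · rcases mul_eq_zero.mp ht₀ with h' | h' <;> omega
  rcases mul_eq_zero.mp hx_eq with h | h
  · left; ext <;> simp only <;> omega
  · right; ext <;> simp only <;> omega

theorem feas2_of_odd (hk : (a₀ : ℤ) + a₁ - a₂ = 2 * k + 1) (h₁ : (a₂ : ℤ) - a₁ ≤ a₀)
    (h₂ : a₀ ≤ a₁ + a₂) (h₃ : a₁ ≤ a₀ + a₂) :
    feas2 a₀ a₁ a₂ (k, a₁ - k) ∧ feas2 a₀ a₁ a₂ (k + 1, a₁ - k - 1) := by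
  simp only [feas2]
  omega

end

/-- If `a₂ - a₁ ≤ a₀ ≤ a₁ + a₂`, `a₁ ≤ a₀ + a₂` and `a₀ - a₁ + a₂` is odd, then
the set of maximizers of `d2` over the feasible region is exactly the pair
`{((a₀+a₁-a₂-1)/2, (-a₀+a₁+a₂+1)/2), ((a₀+a₁-a₂+1)/2, (-a₀+a₁+a₂-1)/2)}`,
and both maximizers give the same value of `d2`. -/
theorem stmt8 (a₀ a₁ a₂ : ℕ) (h₁ : (a₂ : ℤ) - a₁ ≤ a₀) (h₂ : a₀ ≤ a₁ + a₂)
    (h₃ : a₁ ≤ a₀ + a₂) (h₄ : Odd ((a₀ : ℤ) - a₁ + a₂)) :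
    {r : ℤ × ℤ | feas2 a₀ a₁ a₂ r ∧
        ∀ s : ℤ × ℤ, feas2 a₀ a₁ a₂ s → d2 a₀ a₁ a₂ s ≤ d2 a₀ a₁ a₂ r} =
      {((((a₀ : ℤ) + a₁ - a₂ - 1) / 2, ((a₁ : ℤ) + a₂ - a₀ + 1) / 2) : ℤ × ℤ),
       (((a₀ : ℤ) + a₁ - a₂ + 1) / 2, ((a₁ : ℤ) + a₂ - a₀ - 1) / 2)} ∧
    d2 a₀ a₁ a₂ (((a₀ : ℤ) + a₁ - a₂ - 1) / 2, ((a₁ : ℤ) + a₂ - a₀ + 1) / 2) =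
      d2 a₀ a₁ a₂ (((a₀ : ℤ) + a₁ - a₂ + 1) / 2, ((a₁ : ℤ) + a₂ - a₀ - 1) / 2) := by
  obtain ⟨m, hm⟩ := h₄
  obtain ⟨k, hk⟩ : ∃ k : ℤ, (a₀ : ℤ) + a₁ - a₂ = 2 * k + 1 := ⟨m + a₁ - a₂, by omega⟩
  have e₁ : ((a₀ : ℤ) + a₁ - a₂ - 1) / 2 = k := by omega
  have e₂ : ((a₁ : ℤ) + a₂ - a₀ + 1) / 2 = a₁ - k := by omega
  have e₃ : ((a₀ : ℤ) + a₁ - a₂ + 1) / 2 = k + 1 := by omega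
  have e₄ : ((a₁ : ℤ) + a₂ - a₀ - 1) / 2 = a₁ - k - 1 := by omega
  rw [e₁, e₂, e₃, e₄]
  obtain ⟨hp, hq⟩ := feas2_of_odd hk h₁ h₂ h₃
  exact ⟨setOf_maximizers_eq_pair hp hq (d2_eq_d2 hk) (fun _ => d2_le_of_feas2 hk)
    (fun _ => eq_or_eq_of_feas2_of_d2_le hk h₃), d2_eq_d2 hk⟩
end

section
/- Let a_0, a_1, a_2, a_3 be nonnegative integers satisfying a_{i} + a_{i+2} ≥ a_{i+1} for i = −1, 0, 1, 2 (with a_{−1} = a_4 = 0), and suppose a_0 + a_2 > a_1 + a_3. Then every maximizer (r_1, r_2, r_3) of d(a, r) = Σ_{i=1}^3 r_i(a_i + a_{i−1} − r_{i−1} − r_i) (with r_0 = r_4 = 0) over the feasible region {r ∈ ℤ_{≥0}³ : r_i + r_{i+1} ≤ a_i for i = 0,...,3} satisfies r_3 = a_3 and r_1 + r_2 = a_1. -/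
/-!
Each of the four moves `r₁ ↦ r₁ + 1`, `r₂ ↦ r₂ + 1`, `r₃ ↦ r₃ + 1` and
`(r₁, r₂, r₃) ↦ (r₁ + 1, r₂ - 1, r₃ + 1)` increases `d` by the sum of the slacks of the two
constraints it tightens, minus one. So at a maximizer one of those two constraints is tight
for every move. If `r₁ + r₂ < a₁`, the first two moves force `r₁ = a₀` and `r₂ + r₃ = a₂`, whence
`a₀ + a₂ = r₁ + r₂ + r₃ < a₁ + a₃`. If `r₃ < a₃`, the third move forces `r₂ + r₃ = a₂`, and
then the shift is feasible: `r₂ > a₂ - a₃ ≥ 0` and `r₁ = a₁ - a₂ + r₃ < a₁ + a₃ - a₂ < a₀`.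
-/

/-- The dimension of the variety of length-3 chain complexes with ranks `(r₁, r₂, r₃)`. -/
def d3 (a₀ a₁ a₂ a₃ : ℕ) (r : ℤ × ℤ × ℤ) : ℤ :=
  r.1 * ((a₁ : ℤ) + a₀ - r.1) + r.2.1 * ((a₂ : ℤ) + a₁ - r.1 - r.2.1) +
    r.2.2 * ((a₃ : ℤ) + a₂ - r.2.1 - r.2.2)

/-- Feasibility of the rank vector `(r₁, r₂, r₃)`. -/
def feas3 (a₀ a₁ a₂ a₃ : ℕ) (r : ℤ × ℤ × ℤ) : Prop :=
  0 ≤ r.1 ∧ 0 ≤ r.2.1 ∧ 0 ≤ r.2.2 ∧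
    r.1 ≤ a₀ ∧ r.1 + r.2.1 ≤ a₁ ∧ r.2.1 + r.2.2 ≤ a₂ ∧ r.2.2 ≤ a₃

section

variable {a₀ a₁ a₂ a₃ : ℕ} {x y z : ℤ}

theorem d3_raise_r₁ :
    d3 a₀ a₁ a₂ a₃ (x + 1, y, z) = d3 a₀ a₁ a₂ a₃ (x, y, z) + ((a₀ - x) + (a₁ - x - y) - 1) := by
  simp only [d3]; ring

theorem d3_raise_r₂ :
    d3 a₀ a₁ a₂ a₃ (x, y + 1, z) = d3 a₀ a₁ a₂ a₃ (x, y, z) + ((a₁ - x - y) + (a₂ - y - z) - 1) := by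
  simp only [d3]; ring

theorem d3_raise_r₃ :
    d3 a₀ a₁ a₂ a₃ (x, y, z + 1) = d3 a₀ a₁ a₂ a₃ (x, y, z) + ((a₂ - y - z) + (a₃ - z) - 1) := by
  simp only [d3]; ring

theorem d3_shift :
    d3 a₀ a₁ a₂ a₃ (x + 1, y - 1, z + 1) = d3 a₀ a₁ a₂ a₃ (x, y, z) + ((a₀ - x) + (a₃ - z) - 1) := by
  simp only [d3]; ring

theorem IsMaxOn.d3_r₁_saturated (hmax : IsMaxOn (d3 a₀ a₁ a₂ a₃) {s | feas3 a₀ a₁ a₂ a₃ s} (x, y, z))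
    (hf : feas3 a₀ a₁ a₂ a₃ (x, y, z)) : x = a₀ ∨ x + y = a₁ := by
  simp only [feas3] at hf
  by_contra! h
  have := isMaxOn_iff.1 hmax (x + 1, y, z) (by simp only [Set.mem_ofPred_eq, feas3]; omega)
  rw [d3_raise_r₁] at this
  omega

theorem IsMaxOn.d3_r₂_saturated (hmax : IsMaxOn (d3 a₀ a₁ a₂ a₃) {s | feas3 a₀ a₁ a₂ a₃ s} (x, y, z))
    (hf : feas3 a₀ a₁ a₂ a₃ (x, y, z)) : x + y = a₁ ∨ y + z = a₂ := by
  simp only [feas3] at hf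
  by_contra! h
  have := isMaxOn_iff.1 hmax (x, y + 1, z) (by simp only [Set.mem_ofPred_eq, feas3]; omega)
  rw [d3_raise_r₂] at this
  omega

theorem IsMaxOn.d3_r₃_saturated (hmax : IsMaxOn (d3 a₀ a₁ a₂ a₃) {s | feas3 a₀ a₁ a₂ a₃ s} (x, y, z))
    (hf : feas3 a₀ a₁ a₂ a₃ (x, y, z)) : y + z = a₂ ∨ z = a₃ := by
  simp only [feas3] at hf
  by_contra! h
  have := isMaxOn_iff.1 hmax (x, y, z + 1) (by simp only [Set.mem_ofPred_eq, feas3]; omega)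
  rw [d3_raise_r₃] at this
  omega

theorem IsMaxOn.d3_shift_blocked (hmax : IsMaxOn (d3 a₀ a₁ a₂ a₃) {s | feas3 a₀ a₁ a₂ a₃ s} (x, y, z))
    (hf : feas3 a₀ a₁ a₂ a₃ (x, y, z)) : x = a₀ ∨ y = 0 ∨ z = a₃ := by
  simp only [feas3] at hf
  by_contra! h
  have := isMaxOn_iff.1 hmax (x + 1, y - 1, z + 1) (by simp only [Set.mem_ofPred_eq, feas3]; omega)
  rw [d3_shift] at this
  omega

theorem IsMaxOn.d3_r₁_add_r₂ (hmax : IsMaxOn (d3 a₀ a₁ a₂ a₃) {s | feas3 a₀ a₁ a₂ a₃ s} (x, y, z))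
    (hf : feas3 a₀ a₁ a₂ a₃ (x, y, z)) (hcase : a₁ + a₃ < a₀ + a₂) : x + y = a₁ := by
  have h₁ := hmax.d3_r₁_saturated hf
  have h₂ := hmax.d3_r₂_saturated hf
  simp only [feas3] at hf; omega

theorem IsMaxOn.d3_r₃ (hmax : IsMaxOn (d3 a₀ a₁ a₂ a₃) {s | feas3 a₀ a₁ a₂ a₃ s} (x, y, z))
    (hf : feas3 a₀ a₁ a₂ a₃ (x, y, z)) (h2 : a₃ ≤ a₂) (hcase : a₁ + a₃ < a₀ + a₂) : z = a₃ := by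
  have h₁₂ := hmax.d3_r₁_add_r₂ hf hcase
  have h₃ := hmax.d3_r₃_saturated hf
  have hshift := hmax.d3_shift_blocked hf
  simp only [feas3] at hf; omega

end

theorem stmt9_general (a₀ a₁ a₂ a₃ : ℕ)
    (h2 : a₃ ≤ a₂)
    (hcase : a₁ + a₃ < a₀ + a₂) :
    ∀ r : ℤ × ℤ × ℤ, feas3 a₀ a₁ a₂ a₃ r →
      (∀ s : ℤ × ℤ × ℤ, feas3 a₀ a₁ a₂ a₃ s →
        d3 a₀ a₁ a₂ a₃ s ≤ d3 a₀ a₁ a₂ a₃ r) →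
      r.2.2 = (a₃ : ℤ) ∧ r.1 + r.2.1 = (a₁ : ℤ) := by
  rintro ⟨x, y, z⟩ hf hmax
  have hmax : IsMaxOn (d3 a₀ a₁ a₂ a₃) {s | feas3 a₀ a₁ a₂ a₃ s} (x, y, z) := isMaxOn_iff.2 hmax
  exact ⟨hmax.d3_r₃ hf h2 hcase, hmax.d3_r₁_add_r₂ hf hcase⟩

/-- Length 3, case `a₀ + a₂ > a₁ + a₃`: under the hypotheses
`a_i + a_{i+2} ≥ a_{i+1}` for `i = -1, 0, 1, 2` (with `a_{-1} = a₄ = 0`),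
every maximizer of `d3` over the feasible region satisfies
`r₃ = a₃` and `r₁ + r₂ = a₁`. -/
theorem stmt9 (a₀ a₁ a₂ a₃ : ℕ)
    (hm1 : a₀ ≤ a₁) (h0 : a₁ ≤ a₀ + a₂) (h1 : a₂ ≤ a₁ + a₃) (h2 : a₃ ≤ a₂)
    (hcase : a₁ + a₃ < a₀ + a₂) :
    ∀ r : ℤ × ℤ × ℤ, feas3 a₀ a₁ a₂ a₃ r →
      (∀ s : ℤ × ℤ × ℤ, feas3 a₀ a₁ a₂ a₃ s →
        d3 a₀ a₁ a₂ a₃ s ≤ d3 a₀ a₁ a₂ a₃ r) →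
      r.2.2 = (a₃ : ℤ) ∧ r.1 + r.2.1 = (a₁ : ℤ) :=
  stmt9_general a₀ a₁ a₂ a₃ h2 hcase
end

section
/- Let a_0, a_1, a_2, a_3 be nonnegative integers satisfying a_i + a_{i+2} ≥ a_{i+1} for i = −1, 0, 1, 2 (with a_{−1} = a_4 = 0), and suppose a_0 + a_2 = a_1 + a_3. Then every maximizer (r_1, r_2, r_3) of d(a, r) = Σ_{i=1}^3 r_i(a_i + a_{i−1} − r_{i−1} − r_i) over {r ∈ ℤ_{≥0}³ : r_i + r_{i+1} ≤ a_i for i = 0,...,3} satisfies r_1 = a_0, r_3 = a_3, and r_2 = a_1 − a_0 = a_2 − a_3, so that all Betti numbers β_i = a_i − r_i − r_{i+1} vanish. -/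
/-!
`d3` is a quadratic function of `r` whose quadratic part is `-Q`, with `Q` the positive definite
form `rankForm`. When `a₀ - a₁ + a₂ - a₃ = 0` its critical point is the integral rank vector
`exactRanks = (a₀, a₁ - a₀, a₃)` of an exact complex, so `d3 r = d3 exactRanks - Q (r - exactRanks)`.
Since `exactRanks` is feasible once `a₀ ≤ a₁`, it is the unique maximizer.
-/

def rankForm (e : ℤ × ℤ × ℤ) : ℤ :=
  e.1 ^ 2 + e.2.1 ^ 2 + e.2.2 ^ 2 + e.1 * e.2.1 + e.2.1 * e.2.2

theorem two_mul_rankForm (e : ℤ × ℤ × ℤ) :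
    2 * rankForm e = (e.1 - e.2.2) ^ 2 + e.2.1 ^ 2 + (e.1 + e.2.1 + e.2.2) ^ 2 := by
  unfold rankForm
  ring

theorem eq_zero_of_rankForm_nonpos {e : ℤ × ℤ × ℤ} (h : rankForm e ≤ 0) : e = 0 := by
  have hsum := two_mul_rankForm e
  have h₁ : e.1 - e.2.2 = 0 := by nlinarith [sq_nonneg e.2.1, sq_nonneg (e.1 + e.2.1 + e.2.2)]
  have h₂ : e.2.1 = 0 := by nlinarith [sq_nonneg (e.1 - e.2.2), sq_nonneg (e.1 + e.2.1 + e.2.2)]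
  have h₃ : e.1 + e.2.1 + e.2.2 = 0 := by nlinarith [sq_nonneg (e.1 - e.2.2), sq_nonneg e.2.1]
  obtain ⟨e₁, e₂, e₃⟩ := e
  simp only at h₁ h₂ h₃
  simp only [Prod.mk_eq_zero]
  omega

def exactRanks (a₀ a₁ a₃ : ℕ) : ℤ × ℤ × ℤ :=
  ((a₀ : ℤ), (a₁ : ℤ) - a₀, (a₃ : ℤ))

section

variable {a₀ a₁ a₂ a₃ : ℕ}

theorem feas3_exactRanks (h₀₁ : a₀ ≤ a₁) (hχ : a₀ + a₂ = a₁ + a₃) :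
    feas3 a₀ a₁ a₂ a₃ (exactRanks a₀ a₁ a₃) := by
  dsimp only [feas3, exactRanks]
  omega

theorem d3_eq_sub_rankForm (hχ : a₀ + a₂ = a₁ + a₃) (r : ℤ × ℤ × ℤ) :
    d3 a₀ a₁ a₂ a₃ r =
      d3 a₀ a₁ a₂ a₃ (exactRanks a₀ a₁ a₃) - rankForm (r - exactRanks a₀ a₁ a₃) := by
  have hχ' : (a₀ : ℤ) + a₂ = a₁ + a₃ := by exact_mod_cast hχ
  simp only [d3, rankForm, exactRanks, Prod.fst_sub, Prod.snd_sub]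
  linear_combination (r.2.2 + r.2.1 - a₁ + a₀ - a₃) * hχ'

theorem eq_exactRanks_of_le_d3 (hχ : a₀ + a₂ = a₁ + a₃) {r : ℤ × ℤ × ℤ}
    (h : d3 a₀ a₁ a₂ a₃ (exactRanks a₀ a₁ a₃) ≤ d3 a₀ a₁ a₂ a₃ r) :
    r = exactRanks a₀ a₁ a₃ := by
  rw [d3_eq_sub_rankForm hχ r] at h
  exact sub_eq_zero.mp (eq_zero_of_rankForm_nonpos (by linarith))

end

theorem stmt10_general (a₀ a₁ a₂ a₃ : ℕ)
    (hm1 : a₀ ≤ a₁)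
    (hcase : a₀ + a₂ = a₁ + a₃) :
    ∀ r : ℤ × ℤ × ℤ, feas3 a₀ a₁ a₂ a₃ r →
      (∀ s : ℤ × ℤ × ℤ, feas3 a₀ a₁ a₂ a₃ s →
        d3 a₀ a₁ a₂ a₃ s ≤ d3 a₀ a₁ a₂ a₃ r) →
      r.1 = (a₀ : ℤ) ∧ r.2.2 = (a₃ : ℤ) ∧
      r.2.1 = (a₁ : ℤ) - a₀ ∧ r.2.1 = (a₂ : ℤ) - a₃ ∧
      (a₀ : ℤ) - r.1 = 0 ∧ (a₁ : ℤ) - r.1 - r.2.1 = 0 ∧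
      (a₂ : ℤ) - r.2.1 - r.2.2 = 0 ∧ (a₃ : ℤ) - r.2.2 = 0 := by
  intro r _ hmax
  obtain rfl := eq_exactRanks_of_le_d3 hcase (hmax _ (feas3_exactRanks hm1 hcase))
  dsimp only [exactRanks]
  omega

/-- Length 3, case `a₀ + a₂ = a₁ + a₃`: under the hypotheses
`a_i + a_{i+2} ≥ a_{i+1}` for `i = -1, 0, 1, 2` (with `a_{-1} = a₄ = 0`),
every maximizer of `d3` satisfies `r₁ = a₀`, `r₃ = a₃`, `r₂ = a₁ - a₀ = a₂ - a₃`,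
and all Betti numbers `β_i = a_i - r_i - r_{i+1}` vanish. -/
theorem stmt10 (a₀ a₁ a₂ a₃ : ℕ)
    (hm1 : a₀ ≤ a₁) (h0 : a₁ ≤ a₀ + a₂) (h1 : a₂ ≤ a₁ + a₃) (h2 : a₃ ≤ a₂)
    (hcase : a₀ + a₂ = a₁ + a₃) :
    ∀ r : ℤ × ℤ × ℤ, feas3 a₀ a₁ a₂ a₃ r →
      (∀ s : ℤ × ℤ × ℤ, feas3 a₀ a₁ a₂ a₃ s →
        d3 a₀ a₁ a₂ a₃ s ≤ d3 a₀ a₁ a₂ a₃ r) →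
      r.1 = (a₀ : ℤ) ∧ r.2.2 = (a₃ : ℤ) ∧
      r.2.1 = (a₁ : ℤ) - a₀ ∧ r.2.1 = (a₂ : ℤ) - a₃ ∧
      (a₀ : ℤ) - r.1 = 0 ∧ (a₁ : ℤ) - r.1 - r.2.1 = 0 ∧
      (a₂ : ℤ) - r.2.1 - r.2.2 = 0 ∧ (a₃ : ℤ) - r.2.2 = 0 :=
  stmt10_general a₀ a₁ a₂ a₃ hm1 hcase
end

section
/- Let n be odd and m a positive integer, and set a_i = m for all i = 0, ..., n. Then the unique maximizer of d(r) = Σ_{i=1}^n r_i(2m − r_{i−1} − r_i) (with r_0 = r_{n+1} = 0) over the feasible region {r ∈ ℤ_{≥0}^n : r_i + r_{i+1} ≤ m for i = 0,...,n} is the alternating vector r = (m, 0, m, 0, ..., 0, m), for which all Betti numbers β_i = m − r_i − r_{i+1} are zero. -/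
/-!
Completing the square gives `2 d(r) = (n + 1) m² - ∑ᵢ βᵢ²` for every `r` with `r₀ = rₙ₊₁ = 0`.
Hence `2 d(r) ≤ (n + 1) m²`, with equality exactly when all Betti numbers vanish. The conditions
`r₀ = 0` and `rᵢ + rᵢ₊₁ = m` force `r` to alternate between `0` and `m`, and for odd `n` this
alternating vector also satisfies `rₙ₊₁ = 0`.
-/

open Finset

/-- Dimension of the variety of equal-dimension chain complexes with ranks `r`. -/
def Dm (n m : ℕ) (r : ℕ → ℕ) : ℤ :=
  ∑ i ∈ Icc 1 n, (r i : ℤ) * (2 * (m : ℤ) - r (i - 1) - r i)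

/-- Feasibility of the rank vector `r` (with conventions `r 0 = r (n+1) = 0`). -/
def feasm (n m : ℕ) (r : ℕ → ℕ) : Prop :=
  r 0 = 0 ∧ r (n + 1) = 0 ∧ ∀ i ≤ n, r i + r (i + 1) ≤ m

def betti (m : ℕ) (r : ℕ → ℕ) (i : ℕ) : ℤ := m - r i - r (i + 1)

def altRank (m i : ℕ) : ℕ := if i % 2 = 1 then m else 0

section Dm

variable {n m : ℕ} {r : ℕ → ℕ}

lemma Dm_succ : Dm (n + 1) m r = Dm n m r + r (n + 1) * (2 * (m : ℤ) - r n - r (n + 1)) := by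
  rw [Dm, sum_Icc_succ_top (by omega), ← Dm, Nat.add_sub_cancel]

lemma two_mul_Dm_add_sum_betti_sq (hr0 : r 0 = 0) :
    2 * Dm n m r + ∑ i ∈ range (n + 1), betti m r i ^ 2
      = (n + 1) * (m : ℤ) ^ 2 + r (n + 1) * (r (n + 1) + 2 * r n - 2 * (m : ℤ)) := by
  induction n with
  | zero => simp [Dm, betti, hr0]; ring
  | succ k ih =>
    rw [Dm_succ, sum_range_succ, betti]
    push_cast
    linear_combination ih

lemma two_mul_Dm_eq (hr0 : r 0 = 0) (hrn : r (n + 1) = 0) :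
    2 * Dm n m r = (n + 1) * (m : ℤ) ^ 2 - ∑ i ∈ range (n + 1), betti m r i ^ 2 := by
  have h := two_mul_Dm_add_sum_betti_sq (n := n) (m := m) hr0
  rw [hrn] at h
  push_cast at h
  linarith

lemma two_mul_Dm_le (hr0 : r 0 = 0) (hrn : r (n + 1) = 0) :
    2 * Dm n m r ≤ (n + 1) * (m : ℤ) ^ 2 := by
  rw [two_mul_Dm_eq hr0 hrn, sub_le_self_iff]
  exact sum_nonneg fun i _ => sq_nonneg _

lemma two_mul_Dm_eq_iff (hr0 : r 0 = 0) (hrn : r (n + 1) = 0) :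
    2 * Dm n m r = (n + 1) * (m : ℤ) ^ 2 ↔ ∀ i ≤ n, betti m r i = 0 := by
  rw [two_mul_Dm_eq hr0 hrn, sub_eq_self, sum_eq_zero_iff_of_nonneg fun i _ => sq_nonneg _]
  simp only [mem_range, Nat.lt_succ_iff, pow_eq_zero_iff two_ne_zero]

end Dm

lemma betti_altRank (m i : ℕ) : betti m (altRank m) i = 0 := by
  unfold betti altRank
  split_ifs <;> push_cast <;> omega

lemma feasm_altRank {n : ℕ} (m : ℕ) (hn : Odd n) : feasm n m (altRank m) := by
  have hn2 := Nat.odd_iff.mp hn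
  refine ⟨rfl, if_neg (by omega), fun i _ => ?_⟩
  unfold altRank
  split_ifs <;> omega

lemma eq_altRank_of_betti_eq_zero {n m : ℕ} {r : ℕ → ℕ} (hr0 : r 0 = 0)
    (hβ : ∀ i ≤ n, betti m r i = 0) : ∀ i ≤ n, r i = altRank m i := by
  intro i hi
  induction i with
  | zero => exact hr0
  | succ k ih =>
    have hk := hβ k (by omega)
    have hrk := ih (by omega)
    unfold betti at hk
    unfold altRank at hrk ⊢
    split_ifs at hrk ⊢ <;> omega

theorem stmt12_general (n m : ℕ) (hn : Odd n) :
    feasm n m (fun i => if i % 2 = 1 then m else 0) ∧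
    (∀ r : ℕ → ℕ, feasm n m r →
      Dm n m r ≤ Dm n m (fun i => if i % 2 = 1 then m else 0)) ∧
    (∀ r : ℕ → ℕ, feasm n m r →
      (∀ s : ℕ → ℕ, feasm n m s → Dm n m s ≤ Dm n m r) →
      ∀ i ≤ n, r i = if i % 2 = 1 then m else 0) ∧
    (∀ i ≤ n, (m : ℤ) - (if i % 2 = 1 then (m : ℕ) else 0) -
        (if (i + 1) % 2 = 1 then (m : ℕ) else 0) = 0) := by
  have hfeas : feasm n m (altRank m) := feasm_altRank m hn
  have hmax : 2 * Dm n m (altRank m) = (n + 1) * (m : ℤ) ^ 2 :=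
    (two_mul_Dm_eq_iff hfeas.1 hfeas.2.1).2 fun i _ => betti_altRank m i
  refine ⟨hfeas, fun r hr => ?_, fun r hr hopt => ?_, fun i _ => betti_altRank m i⟩
  · change Dm n m r ≤ Dm n m (altRank m)
    linarith [two_mul_Dm_le (n := n) (m := m) hr.1 hr.2.1]
  · refine eq_altRank_of_betti_eq_zero hr.1 ((two_mul_Dm_eq_iff hr.1 hr.2.1).1 ?_)
    linarith [two_mul_Dm_le (n := n) (m := m) hr.1 hr.2.1, hopt _ hfeas]

/-- For `n` odd and `m > 0`, the unique maximizer of `Dm` over the feasible region is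
the alternating vector `(m, 0, m, 0, ..., 0, m)`, for which all Betti numbers
`β_i = m - r_i - r_{i+1}` vanish. -/
theorem stmt12 (n m : ℕ) (hn : Odd n) (hm : 0 < m) :
    feasm n m (fun i => if i % 2 = 1 then m else 0) ∧
    (∀ r : ℕ → ℕ, feasm n m r →
      Dm n m r ≤ Dm n m (fun i => if i % 2 = 1 then m else 0)) ∧
    (∀ r : ℕ → ℕ, feasm n m r →
      (∀ s : ℕ → ℕ, feasm n m s → Dm n m s ≤ Dm n m r) →
      ∀ i ≤ n, r i = if i % 2 = 1 then m else 0) ∧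
    (∀ i ≤ n, (m : ℤ) - (if i % 2 = 1 then (m : ℕ) else 0) -
        (if (i + 1) % 2 = 1 then (m : ℕ) else 0) = 0) :=
  stmt12_general n m hn
end

section
/- Let n be even and m a positive integer, and let r = (r_1, ..., r_n) be a feasible rank vector (r_i + r_{i+1} ≤ m for i = 0, ..., n, with r_0 = r_{n+1} = 0) that is maximal for d(r) = Σ_{i=1}^n r_i(2m − r_{i−1} − r_i). Suppose b ≤ 2k are such that b is odd, r_j + r_{j+1} = m for all b ≤ j ≤ 2k, r_{b−1} + r_b < m, and r_{2k+1} + r_{2k+2} < m. Then the vector r' obtained by increasing r_b, r_{b+2}, ..., r_{2k+1} by 1 and decreasing r_{b+1}, r_{b+3}, ..., r_{2k} by 1 is feasible and satisfies d(r') − d(r) = 2m − (2r_b + 1) − r_{b−1} − r_{2k+2} ≥ 1. -/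
open Finset

/-- Pointwise difference of the `Dm` summands. -/
def gfun (m : ℕ) (r r' : ℕ → ℕ) (i : ℕ) : ℤ :=
  (r' i : ℤ) * (2 * (m : ℤ) - r' (i - 1) - r' i)
    - (r i : ℤ) * (2 * (m : ℤ) - r (i - 1) - r i)

lemma aux_alt_sum (m : ℤ) : ∀ q : ℕ,
    ∑ j ∈ Finset.range (2 * q), (if j % 2 = 0 then -m else m) = 0 := by
  intro q
  induction q with
  | zero => simp
  | succ q ih =>
    rw [show 2 * (q + 1) = 2 * q + 1 + 1 by ring, Finset.sum_range_succ,
      Finset.sum_range_succ, ih, if_pos (by omega : 2 * q % 2 = 0),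
      if_neg (by omega : ¬(2 * q + 1) % 2 = 0)]
    ring

/-- The exchange step in the proof for even `n`: if `r` is feasible and maximal for
`Dm`, `b` is odd, `r_j + r_{j+1} = m` on the window `b ≤ j ≤ 2k`, and the strict
inequalities `r_{b-1} + r_b < m` and `r_{2k+1} + r_{2k+2} < m` hold, then the vector
`r'` obtained by increasing the odd-indexed entries `r_b, r_{b+2}, ..., r_{2k+1}` by `1`
and decreasing the even-indexed entries `r_{b+1}, ..., r_{2k}` by `1` is feasible and
satisfies `Dm r' - Dm r = 2m - (2 r_b + 1) - r_{b-1} - r_{2k+2} ≥ 1`. -/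
theorem stmt16 (n m : ℕ) (hn : Even n) (hm : 0 < m)
    (r : ℕ → ℕ) (hfeas : feasm n m r)
    (hmax : ∀ s : ℕ → ℕ, feasm n m s → Dm n m s ≤ Dm n m r)
    (b k : ℕ) (hb : Odd b) (hbk : b ≤ 2 * k) (hk : 2 * k + 2 ≤ n)
    (hwin : ∀ j, b ≤ j → j ≤ 2 * k → r j + r (j + 1) = m)
    (hleft : r (b - 1) + r b < m)
    (hright : r (2 * k + 1) + r (2 * k + 2) < m)
    (r' : ℕ → ℕ)
    (hr' : r' = fun j => if b ≤ j ∧ j ≤ 2 * k + 1 then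
      (if j % 2 = 1 then r j + 1 else r j - 1) else r j) :
    feasm n m r' ∧
    Dm n m r' - Dm n m r =
      2 * (m : ℤ) - (2 * (r b : ℤ) + 1) - r (b - 1) - r (2 * k + 2) ∧
    Dm n m r + 1 ≤ Dm n m r' := by
  obtain ⟨h0, hN, hle⟩ := hfeas
  have hbodd : b % 2 = 1 := Nat.odd_iff.mp hb
  have hb1 : 1 ≤ b := hb.pos
  have hrdef : ∀ j, r' j = if b ≤ j ∧ j ≤ 2 * k + 1 then
      (if j % 2 = 1 then r j + 1 else r j - 1) else r j := fun j => by rw [hr']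
  have htm : r b < m := by omega
  have hval : ∀ j, b ≤ j → j ≤ 2 * k + 1 →
      ((j % 2 = 1 → r j = r b) ∧ (j % 2 = 0 → r j + r b = m)) := by
    intro j hbj
    induction j, hbj using Nat.le_induction with
    | base => exact fun _ => ⟨fun _ => rfl, fun h => by omega⟩
    | succ j hj ih =>
      intro hj2
      have hw := hwin j hj (by omega)
      have ih' := ih (by omega)
      constructor
      · intro hpar
        have h2 := ih'.2 (by omega)
        omega
      · intro hpar
        have h1 := ih'.1 (by omega)
        omega
  have hro : ∀ j, b ≤ j → j ≤ 2 * k + 1 → j % 2 = 1 → r' j = r b + 1 ∧ r j = r b := by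
    intro j h1 h2 h3
    have hv := (hval j h1 h2).1 h3
    rw [hrdef, if_pos ⟨h1, h2⟩, if_pos h3]
    exact ⟨by omega, hv⟩
  have hre : ∀ j, b ≤ j → j ≤ 2 * k + 1 → j % 2 = 0 → r' j + 1 = r j ∧ r j + r b = m := by
    intro j h1 h2 h3
    have hv := (hval j h1 h2).2 h3
    rw [hrdef, if_pos ⟨h1, h2⟩, if_neg (by omega)]
    exact ⟨by omega, hv⟩
  have hout : ∀ j, j < b ∨ 2 * k + 1 < j → r' j = r j := by
    intro j hj
    rw [hrdef, if_neg (by omega)]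
  -- feasibility
  have hfeas' : feasm n m r' := by
    refine ⟨by rw [hout 0 (by omega)]; exact h0,
      by rw [hout (n + 1) (by omega)]; exact hN, ?_⟩
    intro i hi
    rcases lt_or_ge (i + 1) b with h | h
    · rw [hout i (by omega), hout (i + 1) (by omega)]; exact hle i hi
    rcases eq_or_lt_of_le h with h | h
    · have ho := hro b le_rfl (by omega) hbodd
      rw [hout i (by omega), ← h, ho.1]
      have e : b - 1 = i := by omega
      rw [e] at hleft
      omega
    rcases lt_or_ge (2 * k + 1) i with h2 | h2
    · rw [hout i (by omega), hout (i + 1) (by omega)]; exact hle i hi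
    rcases eq_or_lt_of_le h2 with h2 | h2
    · -- i = 2k+1
      have ho := hro i (by omega) (by omega) (by omega)
      rw [ho.1, hout (i + 1) (by omega)]
      have e : i + 1 = 2 * k + 2 := by omega
      rw [e]
      have := (hro (2 * k + 1) (by omega) (by omega) (by omega)).2
      omega
    · have hw := hwin i (by omega) (by omega)
      rcases Nat.even_or_odd i with he | hoI
      · have h3 : i % 2 = 0 := Nat.even_iff.mp he
        have a1 := hre i (by omega) (by omega) h3
        have a2 := hro (i + 1) (by omega) (by omega) (by omega)
        omega
      · have h3 : i % 2 = 1 := Nat.odd_iff.mp hoI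
        have a1 := hro i (by omega) (by omega) h3
        have a2 := hre (i + 1) (by omega) (by omega) (by omega)
        omega
  -- the sum computation
  have hsum1 : Dm n m r' - Dm n m r = ∑ i ∈ Icc 1 n, gfun m r r' i := by
    unfold Dm gfun
    rw [← Finset.sum_sub_distrib]
  have hsum2 : ∑ i ∈ Icc 1 n, gfun m r r' i = ∑ i ∈ Icc b (2 * k + 2), gfun m r r' i := by
    apply (Finset.sum_subset ?_ ?_).symm
    · intro x hx; simp only [mem_Icc] at *; omega
    · intro x hx hx2
      simp only [mem_Icc] at hx hx2
      have h1 : r' x = r x := hout x (by omega)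
      have h2 : r' (x - 1) = r (x - 1) := hout (x - 1) (by omega)
      unfold gfun
      rw [h1, h2]
      ring
  have hsplit : ∑ i ∈ Icc b (2 * k + 2), gfun m r r' i
      = gfun m r r' b + (∑ i ∈ Icc (b + 1) (2 * k + 1), gfun m r r' i)
        + gfun m r r' (2 * k + 2) := by
    have e : 2 * k + 2 = 2 * k + 1 + 1 := by omega
    rw [e, Finset.sum_Icc_succ_top (by omega : b ≤ 2 * k + 1 + 1)]
    rw [show Icc b (2 * k + 1) = insert b (Icc (b + 1) (2 * k + 1)) by
      rw [Finset.Icc_add_one_left_eq_Ioc, Finset.Ioc_insert_left (by omega : b ≤ 2 * k + 1)]]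
    rw [Finset.sum_insert (by simp)]
  obtain ⟨q, hq1, hq2⟩ : ∃ q, 2 * k + 1 = b + 2 * q ∧ 1 ≤ q :=
    ⟨(2 * k + 1 - b) / 2, by omega⟩
  have hpt : ∀ j, j < 2 * q → gfun m r r' (b + 1 + j)
      = if j % 2 = 0 then -(m : ℤ) else (m : ℤ) := by
    intro j hj
    have e1 : b + 1 + j - 1 = b + j := by omega
    unfold gfun
    rw [e1]
    rcases Nat.even_or_odd j with he | hoJ
    · have hj0 : j % 2 = 0 := Nat.even_iff.mp he
      have a1 := hre (b + 1 + j) (by omega) (by omega) (by omega)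
      have a2 := hro (b + j) (by omega) (by omega) (by omega)
      rw [if_pos hj0, a2.1, a2.2]
      have c1 : (r' (b + 1 + j) : ℤ) = (r (b + 1 + j) : ℤ) - 1 := by
        have := a1.1; omega
      have c2 : (r (b + 1 + j) : ℤ) + (r b : ℤ) = m := by exact_mod_cast a1.2
      rw [c1]
      push_cast
      linear_combination c2
    · have hj1 : j % 2 = 1 := Nat.odd_iff.mp hoJ
      have a1 := hro (b + 1 + j) (by omega) (by omega) (by omega)
      have a2 := hre (b + j) (by omega) (by omega) (by omega)
      rw [if_neg (by omega), a1.1, a1.2]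
      have c1 : (r' (b + j) : ℤ) = (r (b + j) : ℤ) - 1 := by
        have := a2.1; omega
      have c2 : (r (b + j) : ℤ) + (r b : ℤ) = m := by exact_mod_cast a2.2
      rw [c1]
      push_cast
      linear_combination -c2
  have hmid : ∑ i ∈ Icc (b + 1) (2 * k + 1), gfun m r r' i = 0 := by
    rw [show Icc (b + 1) (2 * k + 1) = Ico (b + 1) (2 * k + 1 + 1) from
      (Finset.Ico_add_one_right_eq_Icc ..).symm]
    rw [Finset.sum_Ico_eq_sum_range]
    rw [show 2 * k + 1 + 1 - (b + 1) = 2 * q by omega]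
    rw [Finset.sum_congr rfl (fun j hj => hpt j (mem_range.mp hj))]
    exact aux_alt_sum (m : ℤ) q
  have hgb : gfun m r r' b
      = 2 * (m : ℤ) - (2 * (r b : ℤ) + 1) - (r (b - 1) : ℤ) := by
    unfold gfun
    have ho := hro b le_rfl (by omega) hbodd
    rw [ho.1, hout (b - 1) (by omega)]
    push_cast
    ring
  have hg2 : gfun m r r' (2 * k + 2) = -(r (2 * k + 2) : ℤ) := by
    unfold gfun
    have e1 : 2 * k + 2 - 1 = 2 * k + 1 := by omega
    rw [e1, hout (2 * k + 2) (by omega)]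
    have ho := hro (2 * k + 1) (by omega) (by omega) (by omega)
    rw [ho.1, ho.2]
    push_cast
    ring
  have hDiff : Dm n m r' - Dm n m r =
      2 * (m : ℤ) - (2 * (r b : ℤ) + 1) - r (b - 1) - r (2 * k + 2) := by
    rw [hsum1, hsum2, hsplit, hmid, hgb, hg2]
    ring
  refine ⟨hfeas', hDiff, ?_⟩
  have c1 : (r (b - 1) : ℤ) + (r b : ℤ) + 1 ≤ m := by
    have := hleft; omega
  have c2 : (r b : ℤ) + (r (2 * k + 2) : ℤ) + 1 ≤ m := by
    have hr21 := (hro (2 * k + 1) (by omega) (by omega) (by omega)).2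
    have := hright
    omega
  linarith [hDiff]
end

section
/- Let n be even and m a positive integer. Every maximizer r of d(r) = Σ_{i=1}^n r_i(2m − r_{i−1} − r_i) over the feasible region {r ∈ ℤ_{≥0}^n : r_i + r_{i+1} ≤ m for i = 0, ..., n} (with r_0 = r_{n+1} = 0) has even Betti numbers β_{2k} = m − r_{2k} − r_{2k+1} equal to ⌊m/(n/2+1)⌋ or ⌈m/(n/2+1)⌉ for every k = 0, 1, ..., n/2. -/
open Finset

theorem two_mul_Dm_add_sum_sq_betti (n m : ℕ) (r : ℕ → ℕ) :
    2 * Dm n m r + ∑ i ∈ range n, betti m r i ^ 2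
      = n * (m : ℤ) ^ 2 + ((m : ℤ) - r 0) ^ 2 - ((m : ℤ) - r n) ^ 2 := by
  induction n with
  | zero => simp [Dm]
  | succ n ih =>
    simp only [Dm, betti] at ih ⊢
    rw [sum_Icc_succ_top (by omega), sum_range_succ, Nat.add_sub_cancel]
    push_cast
    linear_combination ih

theorem two_mul_Dm_eq_of_feasm {n m : ℕ} {r : ℕ → ℕ} (hr : feasm n m r) :
    2 * Dm n m r = (n + 1) * (m : ℤ) ^ 2 - ∑ i ∈ range (n + 1), betti m r i ^ 2 := by
  have h := two_mul_Dm_add_sum_sq_betti n m r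
  rw [sum_range_succ, betti, hr.1, hr.2.1] at *
  push_cast at h ⊢
  linear_combination h

theorem betti_nonneg {n m : ℕ} {r : ℕ → ℕ} (hr : feasm n m r) {i : ℕ} (hi : i ≤ n) :
    0 ≤ betti m r i := by
  have := hr.2.2 i hi
  unfold betti
  omega

theorem sum_range_two_mul_add_one {M : Type*} [AddCommMonoid M] (f : ℕ → M) (p : ℕ) :
    ∑ i ∈ range (2 * p + 1), f i
      = ∑ k ∈ range (p + 1), f (2 * k) + ∑ j ∈ range p, f (2 * j + 1) := by
  induction p with
  | zero => simp
  | succ p ih =>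
    rw [show 2 * (p + 1) + 1 = 2 * p + 1 + 1 + 1 by ring, sum_range_succ, sum_range_succ, ih,
      sum_range_succ (fun k ↦ f (2 * k)) (p + 1), sum_range_succ (fun j ↦ f (2 * j + 1)) p,
      show 2 * p + 1 + 1 = 2 * (p + 1) by ring]
    abel

theorem sum_betti_even_sub_sum_betti_odd (m p : ℕ) (r : ℕ → ℕ) :
    ∑ k ∈ range (p + 1), betti m r (2 * k) - ∑ j ∈ range p, betti m r (2 * j + 1)
      = m - r 0 - r (2 * p + 1) := by
  induction p with
  | zero => simp [betti]
  | succ p ih =>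
    rw [sum_range_succ (fun k ↦ betti m r (2 * k)) (p + 1),
      sum_range_succ (fun j ↦ betti m r (2 * j + 1)) p]
    simp only [betti] at ih ⊢
    rw [show 2 * (p + 1) = 2 * p + 1 + 1 by ring]
    linear_combination ih

def excess (p : ℕ) (q : ℤ) (β : ℕ → ℤ) : ℤ :=
  ∑ k ∈ range (p + 1), (β (2 * k) - q) * (β (2 * k) - q - 1) +
    ∑ j ∈ range p, β (2 * j + 1) * (β (2 * j + 1) + 2 * q + 1)

theorem sum_range_sq_eq_add_excess {p : ℕ} {m : ℤ} (q : ℤ) {β : ℕ → ℤ}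
    (h : ∑ k ∈ range (p + 1), β (2 * k) - ∑ j ∈ range p, β (2 * j + 1) = m) :
    ∑ i ∈ range (2 * p + 1), β i ^ 2
      = (2 * q + 1) * m - (p + 1) * (q * (q + 1)) + excess p q β := by
  have hE : ∀ k, β (2 * k) ^ 2
      = (β (2 * k) - q) * (β (2 * k) - q - 1) + (2 * q + 1) * β (2 * k) - q * (q + 1) :=
    fun _ ↦ by ring
  have hO : ∀ j, β (2 * j + 1) ^ 2
      = β (2 * j + 1) * (β (2 * j + 1) + 2 * q + 1) - (2 * q + 1) * β (2 * j + 1) :=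
    fun _ ↦ by ring
  rw [sum_range_two_mul_add_one, excess]
  simp only [hE, hO, sum_add_distrib, sum_sub_distrib, ← mul_sum, sum_const, card_range,
    nsmul_eq_mul]
  push_cast
  linear_combination (2 * q + 1) * h

theorem two_mul_Dm_eq_sub_excess {m p : ℕ} {r : ℕ → ℕ} (hr : feasm (2 * p) m r) (q : ℤ) :
    2 * Dm (2 * p) m r = (2 * p + 1) * (m : ℤ) ^ 2
      - ((2 * q + 1) * m - (p + 1) * (q * (q + 1))) - excess p q (betti m r) := by
  have halt := sum_betti_even_sub_sum_betti_odd m p r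
  rw [hr.1, hr.2.1] at halt
  rw [two_mul_Dm_eq_of_feasm hr, sum_range_sq_eq_add_excess q (m := m) (by simpa using halt)]
  push_cast
  ring

def IsBalanced (p : ℕ) (q : ℤ) (β : ℕ → ℤ) : Prop :=
  (∀ k ≤ p, β (2 * k) = q ∨ β (2 * k) = q + 1) ∧ ∀ j < p, β (2 * j + 1) = 0

theorem excess_nonpos_iff {p : ℕ} {q : ℤ} {β : ℕ → ℤ} (hq : 0 ≤ q)
    (hodd : ∀ j < p, 0 ≤ β (2 * j + 1)) : excess p q β ≤ 0 ↔ IsBalanced p q β := by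
  have hE : ∀ k ∈ range (p + 1), 0 ≤ (β (2 * k) - q) * (β (2 * k) - q - 1) := fun k _ ↦ by
    nlinarith [Int.le_self_sq (β (2 * k) - q)]
  have hO : ∀ j ∈ range p, 0 ≤ β (2 * j + 1) * (β (2 * j + 1) + 2 * q + 1) := fun j hj ↦
    have hj := hodd j (mem_range.mp hj)
    mul_nonneg hj (by linarith)
  rw [excess, IsBalanced]
  constructor
  · intro h
    have hE0 := (sum_eq_zero_iff_of_nonneg hE).mp (by linarith [sum_nonneg hE, sum_nonneg hO])
    have hO0 := (sum_eq_zero_iff_of_nonneg hO).mp (by linarith [sum_nonneg hE, sum_nonneg hO])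
    refine ⟨fun k hk ↦ ?_, fun j hj ↦ ?_⟩
    · rcases mul_eq_zero.mp (hE0 k (mem_range_succ_iff.mpr hk)) with h | h
      · exact Or.inl (by linarith)
      · exact Or.inr (by linarith)
    · have := hodd j hj
      rcases mul_eq_zero.mp (hO0 j (mem_range.mpr hj)) with h | h
      · exact h
      · linarith
  · rintro ⟨hE, hO⟩
    have hE0 : ∀ k ∈ range (p + 1), (β (2 * k) - q) * (β (2 * k) - q - 1) = 0 := fun k hk ↦ by
      rcases hE k (mem_range_succ_iff.mp hk) with h | h <;> rw [h] <;> ring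
    have hO0 : ∀ j ∈ range p, β (2 * j + 1) * (β (2 * j + 1) + 2 * q + 1) = 0 := fun j hj ↦ by
      rw [hO j (mem_range.mp hj), zero_mul]
    rw [sum_eq_zero hE0, sum_eq_zero hO0, add_zero]

def stairRanks (m : ℕ) (B : ℕ → ℕ) (i : ℕ) : ℕ :=
  if Even i then B (i / 2) else m - B (i / 2 + 1)

@[simp]
theorem stairRanks_two_mul (m : ℕ) (B : ℕ → ℕ) (k : ℕ) : stairRanks m B (2 * k) = B k := by
  simp [stairRanks]

@[simp]
theorem stairRanks_two_mul_add_one (m : ℕ) (B : ℕ → ℕ) (k : ℕ) :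
    stairRanks m B (2 * k + 1) = m - B (k + 1) := by
  simp [stairRanks, Nat.add_div_of_dvd_right]

theorem feasm_stairRanks {m p : ℕ} {B : ℕ → ℕ} (hB : Monotone B) (h0 : B 0 = 0)
    (htop : B (p + 1) = m) : feasm (2 * p) m (stairRanks m B) := by
  refine ⟨by simp [stairRanks, h0], by simp [htop], fun i hi ↦ ?_⟩
  obtain ⟨k, rfl | rfl⟩ := Nat.even_or_odd' i
  · have := hB (show k ≤ k + 1 by omega)
    have := hB (show k + 1 ≤ p + 1 by omega)
    simp only [stairRanks_two_mul, stairRanks_two_mul_add_one]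
    omega
  · have := hB (show k + 1 ≤ p + 1 by omega)
    rw [show 2 * k + 1 + 1 = 2 * (k + 1) by ring]
    simp only [stairRanks_two_mul, stairRanks_two_mul_add_one]
    omega

theorem betti_stairRanks_two_mul {m k : ℕ} {B : ℕ → ℕ} (h : B (k + 1) ≤ m) :
    betti m (stairRanks m B) (2 * k) = B (k + 1) - B k := by
  simp only [betti, stairRanks_two_mul, stairRanks_two_mul_add_one]
  push_cast [h]
  ring

theorem betti_stairRanks_two_mul_add_one {m k : ℕ} {B : ℕ → ℕ} (h : B (k + 1) ≤ m) :
    betti m (stairRanks m B) (2 * k + 1) = 0 := by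
  rw [betti, show 2 * k + 1 + 1 = 2 * (k + 1) by ring, stairRanks_two_mul,
    stairRanks_two_mul_add_one]
  push_cast [h]
  ring

theorem exists_feasm_isBalanced (m p : ℕ) :
    ∃ s, feasm (2 * p) m s ∧ IsBalanced p (m / (p + 1) : ℕ) (betti m s) := by
  set B : ℕ → ℕ := fun k ↦ k * m / (p + 1)
  have hB : Monotone B := fun a b hab ↦ Nat.div_le_div_right (Nat.mul_le_mul_right m hab)
  have htop : B (p + 1) = m := Nat.mul_div_cancel_left m p.succ_pos
  have hle : ∀ k ≤ p, B (k + 1) ≤ m := fun k hk ↦ htop ▸ hB (by omega)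
  refine ⟨stairRanks m B, feasm_stairRanks hB (by simp [B]) htop, fun k hk ↦ ?_, fun j hj ↦ ?_⟩
  · rw [betti_stairRanks_two_mul (hle k hk)]
    have hlo := Nat.div_add_div_le_add_div (x := k * m) (y := m) (z := p + 1)
    have hhi := Nat.add_div_le_div_add_div_add_one (k * m) m (p + 1)
    have hstep : B (k + 1) = (k * m + m) / (p + 1) := by simp only [B, add_mul, one_mul]
    have hprev : B k = k * m / (p + 1) := rfl
    omega
  · exact betti_stairRanks_two_mul_add_one (hle j hj.le)

theorem Nat.add_div_succ_eq_div_add_one {m p : ℕ} (h : (p + 1) * (m / (p + 1)) < m) :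
    (m + p) / (p + 1) = m / (p + 1) + 1 := by
  have hmod := Nat.div_add_mod m (p + 1)
  have hlt := Nat.mod_lt m p.succ_pos
  apply Nat.div_eq_of_lt_le <;> nlinarith

theorem isBalanced_betti_of_forall_Dm_le {m p : ℕ} {r : ℕ → ℕ} (hr : feasm (2 * p) m r)
    (hmax : ∀ s, feasm (2 * p) m s → Dm (2 * p) m s ≤ Dm (2 * p) m r) :
    IsBalanced p (m / (p + 1) : ℕ) (betti m r) := by
  have hq : (0 : ℤ) ≤ (m / (p + 1) : ℕ) := Int.natCast_nonneg _
  have hodd {t : ℕ → ℕ} (ht : feasm (2 * p) m t) : ∀ j < p, 0 ≤ betti m t (2 * j + 1) :=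
    fun j hj ↦ betti_nonneg ht (by omega)
  obtain ⟨s, hs, hbal⟩ := exists_feasm_isBalanced m p
  have hexcess := (excess_nonpos_iff hq (hodd hs)).mpr hbal
  refine (excess_nonpos_iff hq (hodd hr)).mp ?_
  linarith [hmax s hs, two_mul_Dm_eq_sub_excess hs (m / (p + 1) : ℕ),
    two_mul_Dm_eq_sub_excess hr (m / (p + 1) : ℕ)]

theorem IsBalanced.betti_eq_div_or_eq_ceil {m p : ℕ} {r : ℕ → ℕ} (hr : feasm (2 * p) m r)
    (hbal : IsBalanced p (m / (p + 1) : ℕ) (betti m r)) {k : ℕ} (hk : k ≤ p) :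
    betti m r (2 * k) = (m / (p + 1) : ℕ) ∨ betti m r (2 * k) = ((m + p) / (p + 1) : ℕ) := by
  refine (hbal.1 k hk).imp id fun hsucc ↦ ?_
  have hsum : ∑ k ∈ range (p + 1), betti m r (2 * k) = m := by
    have halt := sum_betti_even_sub_sum_betti_odd m p r
    rw [sum_eq_zero fun j hj ↦ hbal.2 j (mem_range.mp hj), hr.1, hr.2.1] at halt
    simpa using halt
  have hlt : ∑ _i ∈ range (p + 1), ((m / (p + 1) : ℕ) : ℤ) < m := by
    rw [← hsum]
    refine sum_lt_sum (fun i hi ↦ ?_) ⟨k, mem_range_succ_iff.mpr hk, ?_⟩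
    · rcases hbal.1 i (mem_range_succ_iff.mp hi) with h | h <;> omega
    · omega
  rw [sum_const, card_range, nsmul_eq_mul] at hlt
  rw [hsucc, Nat.add_div_succ_eq_div_add_one (by exact_mod_cast hlt)]
  push_cast
  ring

theorem stmt19_general (n m : ℕ) (hn : Even n) :
    ∀ r : ℕ → ℕ, feasm n m r →
      (∀ s : ℕ → ℕ, feasm n m s → Dm n m s ≤ Dm n m r) →
      ∀ k ≤ n / 2,
        (m : ℤ) - r (2 * k) - r (2 * k + 1) = (m / (n / 2 + 1) : ℕ) ∨
        (m : ℤ) - r (2 * k) - r (2 * k + 1) = ((m + n / 2) / (n / 2 + 1) : ℕ) := by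
  obtain ⟨p, rfl⟩ : ∃ p, n = 2 * p := ⟨n / 2, by rcases hn with ⟨t, rfl⟩; omega⟩
  intro r hr hmax k hk
  rw [show 2 * p / 2 = p by omega] at hk ⊢
  exact (isBalanced_betti_of_forall_Dm_le hr hmax).betti_eq_div_or_eq_ceil hr hk

/-- For `n` even and `m > 0`, every maximizer of `Dm` over the feasible region has
even Betti numbers `β_{2k} = m - r_{2k} - r_{2k+1}` equal to `⌊m/(n/2+1)⌋` or
`⌈m/(n/2+1)⌉` for every `k ≤ n/2`. -/
theorem stmt19 (n m : ℕ) (hn : Even n) (hm : 0 < m) :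
    ∀ r : ℕ → ℕ, feasm n m r →
      (∀ s : ℕ → ℕ, feasm n m s → Dm n m s ≤ Dm n m r) →
      ∀ k ≤ n / 2,
        (m : ℤ) - r (2 * k) - r (2 * k + 1) = (m / (n / 2 + 1) : ℕ) ∨
        (m : ℤ) - r (2 * k) - r (2 * k + 1) = ((m + n / 2) / (n / 2 + 1) : ℕ) :=
  stmt19_general n m hn
end
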